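/- arXiv:2412.06994 — 2 statements merged into one kernel-verified Lean document; each statement's English description precedes it below -/
import Mathlib

section
/- In a control-flow graph where the exit node is reachable from every node, the set of post-dominators of any fixed node v, ordered by the post-dominance relation, is totally ordered (i.e., for any two post-dominators b1, b2 of v, either b1 post-dominates b2 or b2 post-dominates b1). -/
/-- A walk in a directed graph from `u` to `v`. -/
def IsWalk {V : Type*} (adj : V → V → Prop) (u v : V) (l : List V) : Prop :=
  l.head? = some u ∧ l.getLast? = some v ∧ l.Chain' adj

/-- `b` post-dominates `v`: every walk from `v` to `exit` contains `b`. -/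
def PostDom {V : Type*} (adj : V → V → Prop) (exit b v : V) : Prop :=
  ∀ l, IsWalk adj v exit l → b ∈ l

lemma walk_cons {V : Type*} {adj : V → V → Prop} {v c w : V} {p : List V}
    (hadj : adj v c) (hp : IsWalk adj c w p) : IsWalk adj v w (v :: p) := by
  obtain ⟨hh, hl, hc⟩ := hp
  cases p with
  | nil => simp at hh
  | cons a t =>
    simp only [List.head?_cons, Option.some.injEq] at hh
    subst hh
    refine ⟨rfl, by simpa using hl, ?_⟩
    exact List.isChain_cons_cons.mpr ⟨hadj, hc⟩

lemma walk_append {V : Type*} {adj : V → V → Prop} {u m w : V} {l1 l2 : List V}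
    (h1 : IsWalk adj u m l1) (h2 : IsWalk adj m w l2) :
    IsWalk adj u w (l1 ++ l2.tail) := by
  obtain ⟨hh1, hl1, hc1⟩ := h1
  obtain ⟨hh2, hl2, hc2⟩ := h2
  obtain ⟨t, rfl⟩ : ∃ t, l2 = m :: t := by
    cases l2 with
    | nil => simp at hh2
    | cons a t =>
      simp only [List.head?_cons, Option.some.injEq] at hh2
      exact ⟨t, by rw [hh2]⟩
  have hne1 : l1 ≠ [] := by rintro rfl; simp at hh1
  refine ⟨?_, ?_, ?_⟩
  · rw [List.head?_append_of_ne_nil _ hne1]; exact hh1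
  · cases t with
    | nil =>
      obtain rfl : m = w := by simpa using hl2
      simpa using hl1
    | cons b t' =>
      simp only [List.tail_cons]
      rw [List.getLast?_append_of_ne_nil _ (by simp)]
      simpa using hl2
  · apply List.IsChain.append hc1 (List.isChain_cons.mp hc2).2
    intro x hx y hy
    have hxm : m = x := by rw [hl1] at hx; simpa using hx
    subst hxm
    exact (List.isChain_cons.mp hc2).1 y hy

/-- Key lemma: if a walk from `v` contains both `b1` and `b2` (distinct), then there is
an initial walk reaching one of them while avoiding the other. -/
lemma find_first {V : Type*} {adj : V → V → Prop} {b1 b2 : V} (hne : b1 ≠ b2) :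
    ∀ (l : List V) (v e : V), IsWalk adj v e l → b1 ∈ l → b2 ∈ l →
      (∃ p, IsWalk adj v b1 p ∧ b2 ∉ p) ∨ (∃ p, IsWalk adj v b2 p ∧ b1 ∉ p) := by
  intro l
  induction l with
  | nil => intro v e h _ _; exact absurd h.1 (by simp)
  | cons a t ih =>
    intro v e h hb1 hb2
    obtain ⟨hh, hl, hc⟩ := h
    simp only [List.head?_cons, Option.some.injEq] at hh
    subst hh
    by_cases hv1 : a = b1
    · left
      refine ⟨[b1], ⟨by simp [hv1], by simp, List.isChain_singleton _⟩, ?_⟩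
      simpa using fun h : b2 = b1 => hne h.symm
    · by_cases hv2 : a = b2
      · right
        refine ⟨[b2], ⟨by simp [hv2], by simp, List.isChain_singleton _⟩, ?_⟩
        simpa using hne
      · have hb1' : b1 ∈ t := by
          rcases List.mem_cons.mp hb1 with h | h
          · exact absurd h.symm hv1
          · exact h
        have hb2' : b2 ∈ t := by
          rcases List.mem_cons.mp hb2 with h | h
          · exact absurd h.symm hv2
          · exact h
        cases t with
        | nil => simp at hb1'
        | cons c t' =>
          have hw : IsWalk adj c e (c :: t') :=
            ⟨rfl, by simpa using hl, (List.isChain_cons_cons.mp hc).2⟩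
          have hadj : adj a c := (List.isChain_cons_cons.mp hc).1
          rcases ih c e hw hb1' hb2' with ⟨p, hp, hnp⟩ | ⟨p, hp, hnp⟩
          · left
            exact ⟨a :: p, walk_cons hadj hp, by
              simp only [List.mem_cons, not_or]
              exact ⟨fun h => hv2 h.symm, hnp⟩⟩
          · right
            exact ⟨a :: p, walk_cons hadj hp, by
              simp only [List.mem_cons, not_or]
              exact ⟨fun h => hv1 h.symm, hnp⟩⟩

/-- In a control-flow graph where exit is reachable from every node, the set of
post-dominators of any fixed node `v` is totally ordered by post-dominance. -/
theorem postdom_total {V : Type*} [Fintype V] (adj : V → V → Prop) (exit : V)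
    (hreach : ∀ u, ∃ l, IsWalk adj u exit l) (v b1 b2 : V)
    (h1 : PostDom adj exit b1 v) (h2 : PostDom adj exit b2 v) :
    PostDom adj exit b1 b2 ∨ PostDom adj exit b2 b1 := by
  by_cases hne : b1 = b2
  · subst hne
    left
    intro l hl
    exact List.mem_of_mem_head? (by rw [hl.1]; simp)
  by_contra hcon
  push_neg at hcon
  obtain ⟨hn1, hn2⟩ := hcon
  simp only [PostDom, not_forall] at hn1 hn2
  obtain ⟨l2, hw2, hm2⟩ := hn1  -- walk b2 → exit avoiding b1
  obtain ⟨l1, hw1, hm1⟩ := hn2  -- walk b1 → exit avoiding b2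
  obtain ⟨l, hl⟩ := hreach v
  rcases find_first hne l v exit hl (h1 l hl) (h2 l hl) with ⟨p, hp, hnp⟩ | ⟨p, hp, hnp⟩
  · have hw := walk_append hp hw1
    rcases List.mem_append.mp (h2 _ hw) with h | h
    · exact hnp h
    · exact hm1 (List.mem_of_mem_tail h)
  · have hw := walk_append hp hw2
    rcases List.mem_append.mp (h1 _ hw) with h | h
    · exact hnp h
    · exact hm2 (List.mem_of_mem_tail h)
end

section
/- In a control-flow graph, if two distinct nodes a and b both post-dominate a node v, then a post-dominates b or b post-dominates a. -/
private lemma first_pick {V : Type*} {a b : V} (hab : a ≠ b) :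
    ∀ l : List V, a ∈ l → b ∈ l →
      ∃ p q : List V, l = p ++ q ∧
        ((p.getLast? = some a ∧ b ∉ p) ∨ (p.getLast? = some b ∧ a ∉ p)) := by
  intro l
  induction l with
  | nil => intro h; simp at h
  | cons x t ih =>
    intro hal hbl
    by_cases hxa : x = a
    · exact ⟨[x], t, by simp, Or.inl ⟨by simp [hxa], by simpa [hxa] using Ne.symm hab⟩⟩
    · by_cases hxb : x = b
      · exact ⟨[x], t, by simp, Or.inr ⟨by simp [hxb], by simpa [hxb] using hab⟩⟩
      · have hat : a ∈ t := by
          rcases List.mem_cons.mp hal with h | h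
          · exact absurd h.symm hxa
          · exact h
        have hbt : b ∈ t := by
          rcases List.mem_cons.mp hbl with h | h
          · exact absurd h.symm hxb
          · exact h
        obtain ⟨p, q, hpq, hor⟩ := ih hat hbt
        refine ⟨x :: p, q, by simp [hpq], ?_⟩
        have hpne : p ≠ [] := by
          rcases hor with ⟨h, _⟩ | ⟨h, _⟩ <;>
            (intro he; subst he; simp at h)
        obtain ⟨y, s, rfl⟩ := List.exists_cons_of_ne_nil hpne
        rcases hor with ⟨h1, h2⟩ | ⟨h1, h2⟩
        · refine Or.inl ⟨by rw [List.getLast?_cons_cons]; exact h1, ?_⟩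
          simp only [List.mem_cons, not_or]
          exact ⟨fun h => hxb h.symm, by simpa using h2⟩
        · refine Or.inr ⟨by rw [List.getLast?_cons_cons]; exact h1, ?_⟩
          simp only [List.mem_cons, not_or]
          exact ⟨fun h => hxa h.symm, by simpa using h2⟩

private lemma walk_splice {V : Type*} {adj : V → V → Prop} {u m w : V} {p l : List V}
    (hp0 : p.head? = some u) (hp1 : p.getLast? = some m) (hc : p.Chain' adj)
    (hw : IsWalk adj m w l) : IsWalk adj u w (p ++ l.tail) := by
  obtain ⟨hl0, hl1, hlc⟩ := hw
  have hpne : p ≠ [] := by intro h; subst h; simp at hp0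
  cases l with
  | nil => simp at hl0
  | cons x t =>
    have hxm : x = m := by simpa using hl0
    refine ⟨?_, ?_, ?_⟩
    · rw [List.head?_append_of_ne_nil _ hpne]; exact hp0
    · cases t with
      | nil =>
        have hxw : x = w := by simpa using hl1
        simpa [← hxm, hxw] using hp1
      | cons y s =>
        rw [List.getLast?_append_of_ne_nil _ (by simp)]
        simpa using hl1
    · rw [List.Chain', List.isChain_cons] at hlc
      refine List.IsChain.append hc hlc.2 ?_
      intro z hz y hy
      rw [hp1] at hz
      simp only [Option.mem_def, Option.some.injEq] at hz
      subst hz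
      exact hxm ▸ hlc.1 y hy

/-- In a finite CFG with exit reachable from every node, if the distinct nodes
`a` and `b` both post-dominate `v`, then `a` post-dominates `b` or `b`
post-dominates `a`.  (Equivalently, if neither post-dominates the other, they
cannot both post-dominate a common node `v`, since otherwise there would be
walks from `v` to exit containing one but not the other.) -/
theorem common_postdominators_comparable {V : Type*} [Fintype V]
    (adj : V → V → Prop) (exit : V)
    (hreach : ∀ u, ∃ l, IsWalk adj u exit l)
    (a b v : V) (hab : a ≠ b)
    (ha : PostDom adj exit a v) (hb : PostDom adj exit b v) :
    PostDom adj exit a b ∨ PostDom adj exit b a := by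
  by_contra h
  push_neg at h
  obtain ⟨hna, hnb⟩ := h
  simp only [PostDom, not_forall] at hna hnb
  obtain ⟨lb, hlb, halb⟩ := hna
  obtain ⟨la, hla, hbla⟩ := hnb
  obtain ⟨lv, hlv⟩ := hreach v
  have hav := ha lv hlv
  have hbv := hb lv hlv
  obtain ⟨p, q, hpq, hor⟩ := first_pick hab lv hav hbv
  have hpne : p ≠ [] := by
    rcases hor with ⟨h1, _⟩ | ⟨h1, _⟩ <;> (intro he; subst he; simp at h1)
  have hp0 : p.head? = some v := by
    have := hlv.1
    rw [hpq, List.head?_append_of_ne_nil _ hpne] at this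
    exact this
  have hpc : p.Chain' adj := ((hpq ▸ hlv.2.2).left_of_append)
  rcases hor with ⟨h1, h2⟩ | ⟨h1, h2⟩
  · have hw := walk_splice hp0 h1 hpc hla
    have := hb _ hw
    rcases List.mem_append.mp this with h | h
    · exact h2 h
    · exact hbla (List.mem_of_mem_tail h)
  · have hw := walk_splice hp0 h1 hpc hlb
    have := ha _ hw
    rcases List.mem_append.mp this with h | h
    · exact h2 h
    · exact halb (List.mem_of_mem_tail h)
end
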